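/- For n ≥ 2, there is no surjective group homomorphism from the group Δ = ⟨d₁, d₂, β₁ : β₁² = 1, β₁ d₁² d₂² = 1⟩ (the free product presentation of an NEC group with signature (2;−;[2];{−})) onto G_n sending β₁ into the index-two subgroup D_{4n} = ⟨x², y⟩ and d₁, d₂ into G_n ∖ D_{4n}. -/

import Mathlib

/-- Relations of the generalized quasi-dihedral group
`G_n = ⟨x, y : x^(4n) = y^2 = 1, y x y = x^(2n-1)⟩`. -/
def qdRel (n : ℕ) : Set (FreeGroup (Fin 2)) :=
  { FreeGroup.of 0 ^ (4 * n),
    FreeGroup.of 1 ^ 2,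
    FreeGroup.of 1 * FreeGroup.of 0 * FreeGroup.of 1 * (FreeGroup.of 0 ^ (2 * n - 1))⁻¹ }

/-- The generalized quasi-dihedral group of order `8n`. -/
def G (n : ℕ) : Type := PresentedGroup (qdRel n)

instance (n : ℕ) : Group (G n) := by unfold G; infer_instance

/-- The generator `x` of `G n`. -/
def x (n : ℕ) : G n := PresentedGroup.of 0

/-- The generator `y` of `G n`. -/
def y (n : ℕ) : G n := PresentedGroup.of 1

/-- Relations of the NEC group with signature `(2; −; [2]; {−})`:
`Δ = ⟨d₁, d₂, β₁ : β₁² = 1, β₁ d₁² d₂² = 1⟩` where `d₁ = of 0`, `d₂ = of 1`, `β₁ = of 2`. -/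
def necRel : Set (FreeGroup (Fin 3)) :=
  { FreeGroup.of 2 ^ 2,
    FreeGroup.of 2 * FreeGroup.of 0 ^ 2 * FreeGroup.of 1 ^ 2 }

def NEC : Type := PresentedGroup necRel

instance : Group NEC := by unfold NEC; infer_instance

def d₁ : NEC := PresentedGroup.of 0
def d₂ : NEC := PresentedGroup.of 1
def β₁ : NEC := PresentedGroup.of 2

/-! ### Auxiliary material -/

lemma QD.mk_rel {α} {rels : Set (FreeGroup α)} {r} (h : r ∈ rels) :
    PresentedGroup.mk rels r = 1 :=
  (QuotientGroup.eq_one_iff _).mpr (Subgroup.subset_normalClosure h)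

lemma QD.rel_x (n : ℕ) : x n ^ (4 * n) = 1 := by
  have h := QD.mk_rel (show FreeGroup.of 0 ^ (4 * n) ∈ qdRel n from Set.mem_insert _ _)
  simp only [map_pow] at h; exact h

lemma QD.rel_y (n : ℕ) : y n * y n = 1 := by
  have h := QD.mk_rel (show FreeGroup.of 1 ^ 2 ∈ qdRel n from
    Set.mem_insert_of_mem _ (Set.mem_insert _ _))
  rw [map_pow] at h
  simp only [pow_two] at h; exact h

lemma QD.rel_conj (n : ℕ) : y n * x n * y n = x n ^ (2 * n - 1) := by
  have h := QD.mk_rel (show FreeGroup.of 1 * FreeGroup.of 0 * FreeGroup.of 1 *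
      (FreeGroup.of 0 ^ (2 * n - 1))⁻¹ ∈ qdRel n from
    Set.mem_insert_of_mem _ (Set.mem_insert_of_mem _ rfl))
  simp only [map_mul, map_inv, map_pow] at h
  exact (mul_inv_eq_one).mp h

lemma QD.y_inv (n : ℕ) : (y n)⁻¹ = y n :=
  inv_eq_of_mul_eq_one_right (QD.rel_y n)

lemma QD.conj_x (n : ℕ) : y n * x n * (y n)⁻¹ = x n ^ (2 * n - 1) := by
  rw [QD.y_inv]; exact QD.rel_conj n

/-- `y * x = x^(2n-1) * y`. -/
lemma QD.yx (n : ℕ) : y n * x n = x n ^ (2 * n - 1) * y n := by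
  have h := QD.rel_conj n
  calc y n * x n = (y n * x n * y n) * y n := by
        rw [mul_assoc, QD.rel_y, mul_one]
    _ = x n ^ (2 * n - 1) * y n := by rw [h]

/-- `x * y = y * x^(2n-1)`. -/
lemma QD.xy (n : ℕ) : x n * y n = y n * x n ^ (2 * n - 1) := by
  have h := QD.rel_conj n
  calc x n * y n = y n * (y n * x n * y n) := by
        rw [← mul_assoc, ← mul_assoc, QD.rel_y, one_mul]
    _ = y n * x n ^ (2 * n - 1) := by rw [h]

lemma NEC.rel1 : β₁ * β₁ = 1 := by
  have h := QD.mk_rel (show FreeGroup.of 2 ^ 2 ∈ necRel from Set.mem_insert _ _)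
  rw [map_pow] at h
  simp only [pow_two] at h; exact h

lemma NEC.rel2 : β₁ * d₁ ^ 2 * d₂ ^ 2 = 1 := by
  have h := QD.mk_rel (show FreeGroup.of 2 * FreeGroup.of 0 ^ 2 * FreeGroup.of 1 ^ 2 ∈ necRel from
    Set.mem_insert_of_mem _ rfl)
  simp only [map_mul, map_pow] at h; exact h

/-- Every value of a homomorphism out of `NEC` lies in any subgroup containing the images
of the three generators. -/
lemma NEC.hom_mem {M : Type*} [Group M] (F : NEC →* M) (S : Subgroup M)
    (h1 : F d₁ ∈ S) (h2 : F d₂ ∈ S) (h3 : F β₁ ∈ S) (v : NEC) : F v ∈ S :=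
  PresentedGroup.generated_by necRel (S.comap F) (fun j => by
    fin_cases j <;> simpa using (by assumption : _)) v

/-- Lifting a pair of elements satisfying the quasi-dihedral relations to a
homomorphism out of `G n`. -/
def QD.lift2 {M : Type*} [Group M] {n : ℕ} (a b : M)
    (h1 : a ^ (4 * n) = 1) (h2 : b * b = 1) (h3 : b * a * b = a ^ (2 * n - 1)) :
    G n →* M :=
  PresentedGroup.toGroup (f := ![a, b]) (by
    intro r hr
    rcases hr with rfl | rfl | rfl
    · simpa [map_pow] using h1
    · rw [map_pow]; simpa [pow_two] using h2
    · simp only [map_mul, map_inv, map_pow, FreeGroup.lift_apply_of]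
      rw [mul_inv_eq_one]
      simpa using h3)

@[simp] lemma QD.lift2_x {M : Type*} [Group M] {n : ℕ} (a b : M) (h1 h2 h3) :
    QD.lift2 (n := n) a b h1 h2 h3 (x n) = a := by
  exact (PresentedGroup.toGroup.of (x := (0 : Fin 2)) _).trans (by simp)

@[simp] lemma QD.lift2_y {M : Type*} [Group M] {n : ℕ} (a b : M) (h1 h2 h3) :
    QD.lift2 (n := n) a b h1 h2 h3 (y n) = b := by
  exact (PresentedGroup.toGroup.of (x := (1 : Fin 2)) _).trans (by simp)

/-! ### The faithful permutation model, used to bound the order of `x` from below -/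

def QD.cf (n : ℕ) : Bool → ZMod (4*n)
  | false => 1
  | true => ((2*n-1 : ℕ) : ZMod (4*n))

lemma QD.sq1 (n : ℕ) (hn : 2 ≤ n) :
    ((2*n-1 : ℕ) : ZMod (4*n)) * ((2*n-1 : ℕ) : ZMod (4*n)) = 1 := by
  have h4 : ((4*n : ℕ) : ZMod (4*n)) = 0 := ZMod.natCast_self _
  push_cast [Nat.cast_sub (by omega : 1 ≤ 2*n)] at h4 ⊢
  linear_combination ((n : ZMod (4*n)) - 1) * h4

lemma QD.cf_not (n : ℕ) (hn : 2 ≤ n) (e : Bool) :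
    QD.cf n (!e) = ((2*n-1 : ℕ) : ZMod (4*n)) * QD.cf n e := by
  cases e
  · simp [QD.cf]
  · simpa [QD.cf] using (QD.sq1 n hn).symm

def QD.X (n : ℕ) : Equiv.Perm (ZMod (4*n) × Bool) where
  toFun p := (p.1 + QD.cf n p.2, p.2)
  invFun p := (p.1 - QD.cf n p.2, p.2)
  left_inv := by rintro ⟨v, e⟩; simp
  right_inv := by rintro ⟨v, e⟩; simp

def QD.Y (n : ℕ) : Equiv.Perm (ZMod (4*n) × Bool) where
  toFun p := (p.1, !p.2)
  invFun p := (p.1, !p.2)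
  left_inv := by rintro ⟨v, e⟩; simp
  right_inv := by rintro ⟨v, e⟩; simp

@[simp] lemma QD.X_apply (n : ℕ) (p : ZMod (4*n) × Bool) :
    QD.X n p = (p.1 + QD.cf n p.2, p.2) := rfl
@[simp] lemma QD.Y_apply (n : ℕ) (p : ZMod (4*n) × Bool) : QD.Y n p = (p.1, !p.2) := rfl

lemma QD.X_pow (n : ℕ) (m : ℕ) : ∀ p : ZMod (4*n) × Bool,
    (QD.X n ^ m) p = (p.1 + m * QD.cf n p.2, p.2) := by
  induction m with
  | zero => intro p; simp
  | succ k ih =>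
      intro p
      rw [pow_succ, Equiv.Perm.mul_apply, QD.X_apply, ih]
      push_cast
      simp only [Prod.mk.injEq]
      exact ⟨by ring, trivial⟩

lemma QD.X_zpow (n : ℕ) (m : ℤ) (v : ZMod (4*n)) :
    (QD.X n ^ m) (v, false) = (v + m, false) := by
  cases m with
  | ofNat k => rw [Int.ofNat_eq_coe, zpow_natCast, QD.X_pow]; simp [QD.cf]
  | negSucc k =>
      rw [zpow_negSucc]
      have h : (QD.X n ^ (k+1)) (v - (k+1), false) = (v, false) := by
        rw [QD.X_pow]
        simp only [QD.cf, Prod.mk.injEq]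
        refine ⟨by push_cast; ring, trivial⟩
      rw [← h, Equiv.Perm.inv_def, Equiv.symm_apply_apply]
      simp only [Int.cast_negSucc]
      norm_num
      ring_nf

lemma QD.X_h1 (n : ℕ) : QD.X n ^ (4*n) = 1 := by
  ext p
  · rw [QD.X_pow]; simp [ZMod.natCast_self]
  · rw [QD.X_pow]; rfl

lemma QD.Y_h2 (n : ℕ) : QD.Y n * QD.Y n = 1 := by
  ext p <;> simp [Equiv.Perm.mul_apply]

lemma QD.XY_h3 (n : ℕ) (hn : 2 ≤ n) : QD.Y n * QD.X n * QD.Y n = QD.X n ^ (2*n-1) := by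
  ext p
  · rw [QD.X_pow]
    simp [Equiv.Perm.mul_apply, QD.cf_not n hn]
  · rw [QD.X_pow]
    simp [Equiv.Perm.mul_apply]

/-- The permutation model of `G n`. -/
def QD.Φ (n : ℕ) (hn : 2 ≤ n) : G n →* Equiv.Perm (ZMod (4*n) × Bool) :=
  QD.lift2 (QD.X n) (QD.Y n) (QD.X_h1 n) (QD.Y_h2 n) (QD.XY_h3 n hn)

/-- In `G n` the order of `x` is (a multiple of, hence exactly) `4n`. -/
lemma QD.order_x (n : ℕ) (hn : 2 ≤ n) (m : ℤ) (h : x n ^ m = 1) : (4*n : ℤ) ∣ m := by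
  have h1 := congrArg (QD.Φ n hn) h
  rw [map_zpow, map_one] at h1
  rw [show QD.Φ n hn (x n) = QD.X n from QD.lift2_x _ _ _ _ _] at h1
  have h2 := congrArg (fun P : Equiv.Perm (ZMod (4*n) × Bool) => P (0, false)) h1
  simp only [QD.X_zpow, Equiv.Perm.coe_one, id_eq, Prod.mk.injEq] at h2
  have h3 : (m : ZMod (4*n)) = 0 := by
    have := h2.1
    simpa using this
  have := (ZMod.intCast_zmod_eq_zero_iff_dvd m (4*n)).mp h3
  exact_mod_cast this

/-! ### Sign homomorphisms -/

def QD.σ (n : ℕ) (hn : 2 ≤ n) : G n →* ℤˣ :=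
  QD.lift2 (-1) 1
    (Even.neg_one_pow ⟨2*n, by ring⟩)
    (by norm_num)
    (by rw [Odd.neg_one_pow ⟨n-1, by omega⟩]; norm_num)

def QD.ρ (n : ℕ) (hn : 2 ≤ n) : G n →* ℤˣ :=
  QD.lift2 1 (-1)
    (one_pow _)
    (by norm_num)
    (by norm_num)

@[simp] lemma QD.σ_x (n : ℕ) (hn : 2 ≤ n) : QD.σ n hn (x n) = -1 := QD.lift2_x _ _ _ _ _
@[simp] lemma QD.σ_y (n : ℕ) (hn : 2 ≤ n) : QD.σ n hn (y n) = 1 := QD.lift2_y _ _ _ _ _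
@[simp] lemma QD.ρ_x (n : ℕ) (hn : 2 ≤ n) : QD.ρ n hn (x n) = 1 := QD.lift2_x _ _ _ _ _
@[simp] lemma QD.ρ_y (n : ℕ) (hn : 2 ≤ n) : QD.ρ n hn (y n) = -1 := QD.lift2_y _ _ _ _ _

/-- The dihedral quotient of `G n`. -/
def QD.Ψ (n : ℕ) (hn : 2 ≤ n) : G n →* DihedralGroup n :=
  QD.lift2 (DihedralGroup.r 1) (DihedralGroup.sr 0)
    (by
      rw [DihedralGroup.r_one_pow]
      have : ((4*n : ℕ) : ZMod n) = 0 :=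
        (ZMod.natCast_eq_zero_iff _ _).mpr ⟨4, by ring⟩
      rw [this, DihedralGroup.one_def])
    (by simp [DihedralGroup.sr_mul_sr])
    (by
      haveI : NeZero n := ⟨by omega⟩
      rw [DihedralGroup.r_one_pow, DihedralGroup.sr_mul_r, DihedralGroup.sr_mul_sr]
      congr 1
      have : ((2*n-1 : ℕ) : ZMod n) = ((2*n : ℕ) : ZMod n) - 1 := by
        rw [Nat.cast_sub (by omega : 1 ≤ 2*n)]; norm_num
      rw [this, (ZMod.natCast_eq_zero_iff (2*n) n).mpr ⟨2, by ring⟩]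
      ring)

@[simp] lemma QD.Ψ_x (n : ℕ) (hn : 2 ≤ n) : QD.Ψ n hn (x n) = DihedralGroup.r 1 :=
  QD.lift2_x _ _ _ _ _
@[simp] lemma QD.Ψ_y (n : ℕ) (hn : 2 ≤ n) : QD.Ψ n hn (y n) = DihedralGroup.sr 0 :=
  QD.lift2_y _ _ _ _ _

open DihedralGroup in
lemma QD.dih_r_one_zpow (n : ℕ) (m : ℤ) : (r 1 : DihedralGroup n) ^ m = r (m : ZMod n) := by
  have hinv : ∀ i : ZMod n, (r i)⁻¹ = r (-i) := by
    intro i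
    refine inv_eq_of_mul_eq_one_right ?_
    simp [r_mul_r]
  cases m with
  | ofNat k => rw [Int.ofNat_eq_coe, zpow_natCast, r_one_pow]; norm_cast
  | negSucc k =>
      rw [zpow_negSucc, r_one_pow, hinv]
      congr 1
      simp [Int.cast_negSucc]

/-! ### Dichotomy lemmas -/

lemma QD.gen_mem (n : ℕ) (g : G n) :
    g ∈ Subgroup.closure (Set.range (PresentedGroup.of : Fin 2 → G n)) := by
  rw [PresentedGroup.closure_range_of]
  exact Subgroup.mem_top g

/-- Conjugation by `y` preserves `⟨x⟩`. -/
lemma QD.conjK (n : ℕ) (h : G n) (hh : h ∈ Subgroup.closure {x n}) :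
    y n * h * (y n)⁻¹ ∈ Subgroup.closure {x n} := by
  obtain ⟨m, rfl⟩ := Subgroup.mem_closure_singleton.mp hh
  rw [← conj_zpow, QD.conj_x]
  exact Subgroup.zpow_mem _
    (Subgroup.pow_mem _ (Subgroup.mem_closure_singleton.mpr ⟨1, zpow_one _⟩) _) _

/-- Every element of `G n` is in `⟨x⟩` or in `y⟨x⟩`. -/
lemma QD.dichK (n : ℕ) (g : G n) :
    g ∈ Subgroup.closure {x n} ∨ y n * g ∈ Subgroup.closure {x n} := by
  set K := Subgroup.closure {x n} with hK
  have hyyK : y n * y n ∈ K := by rw [QD.rel_y]; exact Subgroup.one_mem _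
  refine Subgroup.closure_induction
    (p := fun g _ => g ∈ K ∨ y n * g ∈ K) ?_ ?_ ?_ ?_ (QD.gen_mem n g)
  · rintro _ ⟨j, rfl⟩
    fin_cases j
    · exact Or.inl (Subgroup.mem_closure_singleton.mpr ⟨1, zpow_one _⟩)
    · refine Or.inr ?_
      show y n * y n ∈ K
      exact hyyK
  · exact Or.inl (Subgroup.one_mem _)
  · rintro a b _ _ (ha | ha) (hb | hb)
    · exact Or.inl (Subgroup.mul_mem _ ha hb)
    · refine Or.inr ?_
      have h : y n * (a * b) = (y n * a * (y n)⁻¹) * (y n * b) := by group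
      rw [h]
      exact Subgroup.mul_mem _ (QD.conjK n a ha) hb
    · refine Or.inr ?_
      have h : y n * (a * b) = (y n * a) * b := by group
      rw [h]
      exact Subgroup.mul_mem _ ha hb
    · refine Or.inl ?_
      have h2 : a * b = ((y n * y n)⁻¹ * (y n * (y n * a) * (y n)⁻¹)) * (y n * b) := by group
      rw [h2]
      exact Subgroup.mul_mem _
        (Subgroup.mul_mem _ (Subgroup.inv_mem _ hyyK) (QD.conjK n _ ha)) hb
  · rintro a _ (ha | ha)
    · exact Or.inl (Subgroup.inv_mem _ ha)
    · refine Or.inr ?_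
      have h : y n * a⁻¹ = (y n * (y n * a)⁻¹ * (y n)⁻¹) * (y n * y n) := by group
      rw [h]
      exact Subgroup.mul_mem _ (QD.conjK n _ (Subgroup.inv_mem _ ha)) hyyK

lemma QD.x_pow_eq (n : ℕ) (hn : 2 ≤ n) :
    x n ^ (2*n-1) = x n ^ (2*n-2) * x n ∧ x n ^ (2*n-1) = x n * x n ^ (2*n-2) ∧
      x n ^ (2*n-2) = (x n ^ 2) ^ (n-1) := by
  refine ⟨?_, ?_, ?_⟩
  · rw [← pow_succ]; congr 1; omega
  · rw [← pow_succ']; congr 1; omega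
  · rw [← pow_mul]; congr 1; omega

/-- Conjugation by `x` preserves `⟨x², y⟩`. -/
lemma QD.conjH (n : ℕ) (hn : 2 ≤ n) (h : G n) (hh : h ∈ Subgroup.closure {x n ^ 2, y n}) :
    x n * h * (x n)⁻¹ ∈ Subgroup.closure {x n ^ 2, y n} := by
  set H := Subgroup.closure {x n ^ 2, y n} with hH
  have hx2 : x n ^ 2 ∈ H := Subgroup.subset_closure (Set.mem_insert _ _)
  have hy : y n ∈ H := Subgroup.subset_closure (Set.mem_insert_of_mem _ rfl)
  refine Subgroup.closure_induction
    (p := fun h _ => x n * h * (x n)⁻¹ ∈ H) ?_ ?_ ?_ ?_ hh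
  · rintro g hg
    rcases hg with rfl | rfl
    · have h : x n * x n ^ 2 * (x n)⁻¹ = x n ^ 2 := by group
      rw [h]; exact hx2
    · have h : x n * y n * (x n)⁻¹ = y n * (x n ^ 2) ^ (n-1) := by
        rw [← (QD.x_pow_eq n hn).2.2]
        have h1 : x n * y n = y n * x n ^ (2*n-1) := QD.xy n
        rw [h1, (QD.x_pow_eq n hn).1]
        group
      rw [h]
      exact Subgroup.mul_mem _ hy (Subgroup.pow_mem _ hx2 _)
  · simpa using Subgroup.one_mem H
  · intro a b _ _ ha hb
    have h : x n * (a * b) * (x n)⁻¹ = (x n * a * (x n)⁻¹) * (x n * b * (x n)⁻¹) := by group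
    rw [h]; exact Subgroup.mul_mem _ ha hb
  · intro a _ ha
    have h : x n * a⁻¹ * (x n)⁻¹ = (x n * a * (x n)⁻¹)⁻¹ := by group
    rw [h]; exact Subgroup.inv_mem _ ha

/-- Conjugation by `x⁻¹` preserves `⟨x², y⟩`. -/
lemma QD.conjH' (n : ℕ) (hn : 2 ≤ n) (h : G n) (hh : h ∈ Subgroup.closure {x n ^ 2, y n}) :
    (x n)⁻¹ * h * x n ∈ Subgroup.closure {x n ^ 2, y n} := by
  set H := Subgroup.closure {x n ^ 2, y n} with hH
  have hx2 : x n ^ 2 ∈ H := Subgroup.subset_closure (Set.mem_insert _ _)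
  have hy : y n ∈ H := Subgroup.subset_closure (Set.mem_insert_of_mem _ rfl)
  refine Subgroup.closure_induction
    (p := fun h _ => (x n)⁻¹ * h * x n ∈ H) ?_ ?_ ?_ ?_ hh
  · rintro g hg
    rcases hg with rfl | rfl
    · have h : (x n)⁻¹ * x n ^ 2 * x n = x n ^ 2 := by group
      rw [h]; exact hx2
    · have h : (x n)⁻¹ * y n * x n = (x n ^ 2) ^ (n-1) * y n := by
        rw [← (QD.x_pow_eq n hn).2.2]
        have h1 : y n * x n = x n ^ (2*n-1) * y n := QD.yx n
        have : (x n)⁻¹ * (y n * x n) = (x n)⁻¹ * (x n ^ (2*n-1) * y n) := by rw [h1]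
        rw [← mul_assoc] at this
        rw [this, (QD.x_pow_eq n hn).2.1]
        group
      rw [h]
      exact Subgroup.mul_mem _ (Subgroup.pow_mem _ hx2 _) hy
  · simpa using Subgroup.one_mem H
  · intro a b _ _ ha hb
    have h : (x n)⁻¹ * (a * b) * x n = ((x n)⁻¹ * a * x n) * ((x n)⁻¹ * b * x n) := by group
    rw [h]; exact Subgroup.mul_mem _ ha hb
  · intro a _ ha
    have h : (x n)⁻¹ * a⁻¹ * x n = ((x n)⁻¹ * a * x n)⁻¹ := by group
    rw [h]; exact Subgroup.inv_mem _ ha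

/-- Every element of `G n` is in `⟨x², y⟩` or in `x⟨x², y⟩`. -/
lemma QD.dichH (n : ℕ) (hn : 2 ≤ n) (g : G n) :
    g ∈ Subgroup.closure {x n ^ 2, y n} ∨ x n * g ∈ Subgroup.closure {x n ^ 2, y n} := by
  set H := Subgroup.closure {x n ^ 2, y n} with hH
  have hx2 : x n ^ 2 ∈ H := Subgroup.subset_closure (Set.mem_insert _ _)
  have hy : y n ∈ H := Subgroup.subset_closure (Set.mem_insert_of_mem _ rfl)
  refine Subgroup.closure_induction
    (p := fun g _ => g ∈ H ∨ x n * g ∈ H) ?_ ?_ ?_ ?_ (QD.gen_mem n g)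
  · rintro _ ⟨j, rfl⟩
    fin_cases j
    · refine Or.inr ?_
      show x n * x n ∈ H
      rw [← pow_two]; exact hx2
    · exact Or.inl hy
  · exact Or.inl (Subgroup.one_mem _)
  · rintro a b _ _ (ha | ha) (hb | hb)
    · exact Or.inl (Subgroup.mul_mem _ ha hb)
    · refine Or.inr ?_
      have h : x n * (a * b) = (x n * a * (x n)⁻¹) * (x n * b) := by group
      rw [h]
      exact Subgroup.mul_mem _ (QD.conjH n hn a ha) hb
    · refine Or.inr ?_
      have h : x n * (a * b) = (x n * a) * b := by group
      rw [h]
      exact Subgroup.mul_mem _ ha hb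
    · refine Or.inl ?_
      have h : a * b = ((x n)⁻¹ * (x n * a) * x n) * (x n ^ 2)⁻¹ * (x n * b) := by group
      rw [h]
      exact Subgroup.mul_mem _
        (Subgroup.mul_mem _ (QD.conjH' n hn _ ha) (Subgroup.inv_mem _ hx2)) hb
  · rintro a _ (ha | ha)
    · exact Or.inl (Subgroup.inv_mem _ ha)
    · refine Or.inr ?_
      have h : x n * a⁻¹ = (x n * (x n * a)⁻¹ * (x n)⁻¹) * x n ^ 2 := by group
      rw [h]
      exact Subgroup.mul_mem _ (QD.conjH n hn _ (Subgroup.inv_mem _ ha)) hx2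

/-! ### The main theorem -/

/-- In the mixed case, `θ d₁ = x^k`, `θ d₂ = y x^j`, derive a contradiction with
surjectivity. -/
lemma QD.mixed_case (n : ℕ) (hn : 2 ≤ n) (θ : NEC →* G n)
    (hsurj : Function.Surjective θ) (D E : NEC)
    (hbrel : θ β₁ = (θ D ^ 2 * θ E ^ 2)⁻¹ ∨ θ β₁ = (θ E ^ 2 * θ D ^ 2)⁻¹)
    (hgen : ∀ (M : Type) [Group M] (F : NEC →* M) (S : Subgroup M),
        F D ∈ S → F E ∈ S → F β₁ ∈ S → ∀ v, F v ∈ S)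
    (hD : θ D ∈ Subgroup.closure {x n})
    (hE : y n * θ E ∈ Subgroup.closure {x n}) : False := by
  obtain ⟨k, hk⟩ := Subgroup.mem_closure_singleton.mp hD
  obtain ⟨j, hj⟩ := Subgroup.mem_closure_singleton.mp hE
  have hb2 : θ β₁ * θ β₁ = 1 := by rw [← map_mul, NEC.rel1, map_one]
  have hEe : θ E = y n * x n ^ j := by
    have h : y n * (y n * θ E) = θ E := by rw [← mul_assoc, QD.rel_y, one_mul]
    rw [← h, ← hj]
  -- squares
  have hsqE : θ E ^ 2 = x n ^ (((2*n-1 : ℕ) : ℤ) * j + j) := by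
    rw [pow_two, hEe]
    have h : y n * x n ^ j * (y n * x n ^ j) = (y n * x n ^ j * (y n)⁻¹) * x n ^ j := by
      rw [QD.y_inv]; group
    rw [h, ← conj_zpow, QD.conj_x, ← zpow_natCast (x n) (2*n-1), ← zpow_mul, ← zpow_add]
  have hsqD : θ D ^ 2 = x n ^ (k * 2) := by
    rw [← hk, ← zpow_natCast (x n ^ k) 2, ← zpow_mul]
    norm_num
  -- the order relation
  have hbx : θ β₁ = x n ^ (-(k * 2 + (((2*n-1 : ℕ) : ℤ) * j + j))) := by
    rcases hbrel with h | h
    · rw [h, hsqD, hsqE, ← zpow_add, ← zpow_neg]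
    · rw [h, hsqD, hsqE, ← zpow_add, ← zpow_neg]
      congr 1
      ring
  have hone : x n ^ (-(k * 2 + (((2*n-1 : ℕ) : ℤ) * j + j)) +
      -(k * 2 + (((2*n-1 : ℕ) : ℤ) * j + j))) = 1 := by
    rw [zpow_add, ← hbx]
    exact hb2
  have hdvd := QD.order_x n hn _ hone
  have hnk : (n : ℤ) ∣ k := by
    have hc : ((2*n-1 : ℕ) : ℤ) = 2*(n:ℤ) - 1 := by
      push_cast [Nat.cast_sub (by omega : 1 ≤ 2*n)]; ring
    rw [hc] at hdvd
    have h4 : (4 : ℤ) * (n : ℤ) ∣ 4 * (k + (n:ℤ) * j) := by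
      obtain ⟨t, ht⟩ := hdvd
      refine ⟨-t, ?_⟩
      have : -(k * 2 + (2*(n:ℤ) - 1) * j + j) - -(k*2 + ((2*(n:ℤ)-1) * j + j)) = 0 := by ring
      nlinarith [ht]
    have h5 : (n : ℤ) ∣ k + (n:ℤ) * j :=
      (mul_dvd_mul_iff_left (by norm_num : (4:ℤ) ≠ 0)).mp h4
    have h6 : (n : ℤ) ∣ (k + (n:ℤ)*j) - (n:ℤ)*j := dvd_sub h5 (Dvd.intro j rfl)
    simpa using h6
  -- pass to the dihedral quotient
  have hΨD : QD.Ψ n hn (θ D) = 1 := by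
    rw [← hk, map_zpow, QD.Ψ_x, QD.dih_r_one_zpow,
      (ZMod.intCast_zmod_eq_zero_iff_dvd k n).mpr (by exact_mod_cast hnk)]
    exact DihedralGroup.one_def.symm
  have hΨE : QD.Ψ n hn (θ E) = DihedralGroup.sr ((j : ℤ) : ZMod n) := by
    rw [hEe, map_mul, map_zpow, QD.Ψ_x, QD.Ψ_y, QD.dih_r_one_zpow,
      DihedralGroup.sr_mul_r, zero_add]
  set s : DihedralGroup n := DihedralGroup.sr ((j : ℤ) : ZMod n) with hs
  have hss : s * s = 1 := by
    rw [hs, DihedralGroup.sr_mul_sr, sub_self]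
    exact DihedralGroup.one_def.symm
  set S := Subgroup.zpowers s with hS
  have hmemD : (QD.Ψ n hn).comp θ D ∈ S := by
    rw [MonoidHom.comp_apply, hΨD]; exact Subgroup.one_mem _
  have hmemE : (QD.Ψ n hn).comp θ E ∈ S := by
    rw [MonoidHom.comp_apply, hΨE]; exact Subgroup.mem_zpowers _
  have hmemβ : (QD.Ψ n hn).comp θ β₁ ∈ S := by
    rcases hbrel with h | h <;>
      rw [MonoidHom.comp_apply, h, map_inv, map_mul, map_pow, map_pow] <;>
      exact Subgroup.inv_mem _ (Subgroup.mul_mem _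
        (Subgroup.pow_mem _ (by first
          | exact hmemD
          | exact hmemE) _)
        (Subgroup.pow_mem _ (by first
          | exact hmemD
          | exact hmemE) _))
  have hall := hgen (DihedralGroup n) ((QD.Ψ n hn).comp θ) S hmemD hmemE hmemβ
  obtain ⟨w, hw⟩ := hsurj (x n)
  have hr1 : (DihedralGroup.r 1 : DihedralGroup n) ∈ S := by
    have h := hall w
    rwa [MonoidHom.comp_apply, hw, QD.Ψ_x] at h
  obtain ⟨m, hm⟩ := Subgroup.mem_zpowers_iff.mp hr1
  rcases Int.even_or_odd m with ⟨c, hc⟩ | ⟨c, hc⟩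
  · have hc2 : m = 2 * c := by omega
    rw [hc2, zpow_mul] at hm
    have h2 : s ^ (2:ℤ) = 1 := by
      rw [show (2:ℤ) = 1 + 1 from rfl, zpow_add, zpow_one, hss]
    rw [h2, one_zpow] at hm
    have h0 : (1 : ZMod n) = 0 := by
      have := hm
      rw [DihedralGroup.one_def] at this
      exact (DihedralGroup.r.injEq _ _ ▸ this : (0 : ZMod n) = 1).symm
    have : n ∣ 1 := by
      have := (ZMod.natCast_eq_zero_iff 1 n).mp (by simpa using h0)
      exact this
    have h1 := Nat.le_of_dvd one_pos this
    omega
  · have hc2 : m = 2 * c + 1 := by omega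
    rw [hc2, zpow_add, zpow_mul, zpow_one] at hm
    have h2 : s ^ (2:ℤ) = 1 := by
      rw [show (2:ℤ) = 1 + 1 from rfl, zpow_add, zpow_one, hss]
    rw [h2, one_zpow, one_mul] at hm
    rw [hs] at hm
    cases hm

theorem stmt18 (n : ℕ) (hn : 2 ≤ n) :
    ¬ ∃ θ : NEC →* G n, Function.Surjective θ ∧
      θ β₁ ∈ Subgroup.closure {x n ^ 2, y n} ∧
      θ d₁ ∉ Subgroup.closure {x n ^ 2, y n} ∧
      θ d₂ ∉ Subgroup.closure {x n ^ 2, y n} := by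
  rintro ⟨θ, hsurj, _hβ, hd1, hd2⟩
  have hbrel : θ β₁ = (θ d₁ ^ 2 * θ d₂ ^ 2)⁻¹ := by
    have h := congrArg θ NEC.rel2
    rw [map_mul, map_mul, map_pow, map_pow, map_one] at h
    rw [← one_mul (θ d₁ ^ 2 * θ d₂ ^ 2)⁻¹, ← h]
    group
  -- values of σ on the images
  have hHσ : Subgroup.closure {x n ^ 2, y n} ≤ (QD.σ n hn).ker := by
    rw [Subgroup.closure_le]
    rintro g (rfl | rfl) <;> simp [MonoidHom.mem_ker]
  have hKρ : Subgroup.closure {x n} ≤ (QD.ρ n hn).ker := by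
    rw [Subgroup.closure_le]
    rintro g rfl
    simp [MonoidHom.mem_ker]
  have hσ : ∀ v : NEC, θ v ∉ Subgroup.closure {x n ^ 2, y n} → QD.σ n hn (θ v) = -1 := by
    intro v hv
    rcases QD.dichH n hn (θ v) with h | h
    · exact absurd h hv
    · have h1 : QD.σ n hn (x n * θ v) = 1 := hHσ h
      rw [map_mul, QD.σ_x] at h1
      rcases Int.units_eq_one_or (QD.σ n hn (θ v)) with h2 | h2
      · rw [h2] at h1; norm_num at h1
      · exact h2
  have hσ1 := hσ d₁ hd1
  have hσ2 := hσ d₂ hd2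
  -- main case analysis
  rcases QD.dichK n (θ d₁) with hK1 | hK1 <;> rcases QD.dichK n (θ d₂) with hK2 | hK2
  · -- both in ⟨x⟩ : use ρ
    have f1 : QD.ρ n hn (θ d₁) = 1 := hKρ hK1
    have f2 : QD.ρ n hn (θ d₂) = 1 := hKρ hK2
    have f3 : ((QD.ρ n hn).comp θ) β₁ = 1 := by
      rw [MonoidHom.comp_apply, hbrel, map_inv, map_mul, map_pow, map_pow, f1, f2]
      norm_num
    have hall := NEC.hom_mem ((QD.ρ n hn).comp θ) ⊥
      (by rw [Subgroup.mem_bot, MonoidHom.comp_apply]; exact f1)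
      (by rw [Subgroup.mem_bot, MonoidHom.comp_apply]; exact f2)
      (by rw [Subgroup.mem_bot]; exact f3)
    obtain ⟨w, hw⟩ := hsurj (y n)
    have h := Subgroup.mem_bot.mp (hall w)
    rw [MonoidHom.comp_apply, hw, QD.ρ_y] at h
    norm_num at h
  · -- mixed : d₁ ∈ ⟨x⟩, d₂ ∉
    exact QD.mixed_case n hn θ hsurj d₁ d₂ (Or.inl hbrel)
      (fun M _ F S h1 h2 h3 v => NEC.hom_mem F S h1 h2 h3 v) hK1 hK2
  · -- mixed : d₂ ∈ ⟨x⟩, d₁ ∉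
    exact QD.mixed_case n hn θ hsurj d₂ d₁ (Or.inr hbrel)
      (fun M _ F S h1 h2 h3 v => NEC.hom_mem F S h2 h1 h3 v) hK2 hK1
  · -- both outside ⟨x⟩ : use σ·ρ
    have hρ : ∀ v : NEC, y n * θ v ∈ Subgroup.closure {x n} → QD.ρ n hn (θ v) = -1 := by
      intro v hv
      have h1 : QD.ρ n hn (y n * θ v) = 1 := hKρ hv
      rw [map_mul, QD.ρ_y] at h1
      rcases Int.units_eq_one_or (QD.ρ n hn (θ v)) with h2 | h2
      · rw [h2] at h1; norm_num at h1
      · exact h2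
    have hρ1 := hρ d₁ hK1
    have hρ2 := hρ d₂ hK2
    set F : G n →* ℤˣ := QD.σ n hn * QD.ρ n hn with hF
    have f1 : F (θ d₁) = 1 := by rw [hF, MonoidHom.mul_apply, hσ1, hρ1]; norm_num
    have f2 : F (θ d₂) = 1 := by rw [hF, MonoidHom.mul_apply, hσ2, hρ2]; norm_num
    have f3 : F (θ β₁) = 1 := by
      rw [hbrel, map_inv, map_mul, map_pow, map_pow, f1, f2]
      norm_num
    have hall := NEC.hom_mem (F.comp θ) ⊥
      (by rw [Subgroup.mem_bot, MonoidHom.comp_apply]; exact f1)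
      (by rw [Subgroup.mem_bot, MonoidHom.comp_apply]; exact f2)
      (by rw [Subgroup.mem_bot, MonoidHom.comp_apply]; exact f3)
    obtain ⟨w, hw⟩ := hsurj (x n)
    have h := Subgroup.mem_bot.mp (hall w)
    rw [MonoidHom.comp_apply, hw, hF, MonoidHom.mul_apply, QD.σ_x, QD.ρ_x] at h
    norm_num at h
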